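/- Let ψ: ℝ → ℝ be C¹, non-negative, with ψ(0)=1, ψ even, and suppose there exist C>0 and δ>1 such that |ψ(x)| + |x·ψ'(x)| ≤ C·(1+x²)^{-δ/2} for all x ∈ ℝ. Let μ be a probability measure on ℝ, 0 < α ≤ 1, and x ∈ ℝ. If D_μ^α(x) := limsup_{ε→0⁺} μ((x−ε, x+ε))/(2ε)^α = ∞, then C_{μ,ψ}^α(x) := limsup_{a→0⁺} a^{−α}·(ψ_a * μ)(x) = ∞, where ψ_a(x) = ψ(x/a). Consequently, for non-negative ψ, C_{μ,ψ}^α(x) and D_μ^α(x) are either both finite or both infinite. -/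

import Mathlib

/-! Since `ψ` is continuous with `ψ 0 = 1`, we have `ψ ≥ 1/2` on some `(-c, c)`, so
`a^{-α} (ψ_a * μ)(x)` dominates a fixed multiple of `μ((x - ca, x + ca)) / (2ca)^α`: an infinite
upper `α`-density forces an infinite upper convolution density.

Conversely, a finite upper density gives `μ((x - ε, x + ε)) ≤ K ε^α` for every `ε > 0` (large `ε`
being handled by finiteness of `μ`). As `|ψ t| ≤ C 2^{-kδ}` once `2^k ≤ |t|`, `|ψ|` is dominated by
`C ∑ₖ 2^{-kδ} 1_{|t| < 2^{k+1}}`, which bounds `(ψ_a * μ)(x)` by `C K (2a)^α ∑ₖ 2^{k(α-δ)}`, a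
convergent geometric series because `α ≤ 1 < δ`. -/

open MeasureTheory Filter Real Set Topology

noncomputable def densityRatio (μ : Measure ℝ) (α x ε : ℝ) : ℝ :=
  (μ (Ioo (x - ε) (x + ε))).toReal / (2 * ε) ^ α

noncomputable def scaledConv (ψ : ℝ → ℝ) (μ : Measure ℝ) (α x a : ℝ) : ℝ :=
  a ^ (-α) * ∫ y, ψ ((x - y) / a) ∂μ

theorem EReal.limsup_coe_eq_top_iff {β : Type*} {l : Filter β} {u : β → ℝ} :
    limsup (fun z => (u z : EReal)) l = ⊤ ↔ ∀ M : ℝ, ∃ᶠ z in l, M < u z := by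
  refine ⟨fun h M => ?_, fun h => (EReal.eq_top_iff_forall_lt _).2 fun M => ?_⟩
  · have hM : (M : EReal) < limsup (fun z => (u z : EReal)) l := h ▸ EReal.coe_lt_top M
    simpa only [EReal.coe_lt_coe_iff] using frequently_lt_of_lt_limsup (by isBoundedDefault) hM
  · refine (EReal.coe_lt_coe_iff.2 (lt_add_one M)).trans_le (le_limsup_of_frequently_le' ?_)
    exact (h (M + 1)).mono fun z hz => EReal.coe_le_coe_iff.2 hz.le

theorem abs_sub_div_lt_iff {x y a r : ℝ} (ha : 0 < a) :
    |(x - y) / a| < r ↔ y ∈ Ioo (x - r * a) (x + r * a) := by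
  rw [abs_div, abs_of_pos ha, div_lt_iff₀ ha, abs_sub_lt_iff, mem_Ioo]
  constructor <;> rintro ⟨h₁, h₂⟩ <;> constructor <;> linarith

theorem integrable_comp_sub_div {f : ℝ → ℝ} {μ : Measure ℝ} [IsFiniteMeasure μ] {C δ : ℝ}
    (hf : Continuous f) (hC : 0 ≤ C) (hδ : 0 ≤ δ)
    (hdecay : ∀ t, |f t| ≤ C * (1 + t ^ 2) ^ (-δ / 2)) (x a : ℝ) :
    Integrable (fun y => f ((x - y) / a)) μ := by
  refine Integrable.of_bound (hf.comp (by fun_prop)).aestronglyMeasurable C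
    (Eventually.of_forall fun y => (hdecay _).trans (mul_le_of_le_one_right hC ?_))
  exact rpow_le_one_of_one_le_of_nonpos (by nlinarith) (by linarith)

section LowerBound

variable {ψ : ℝ → ℝ} {μ : Measure ℝ} [IsFiniteMeasure μ] {α x m c a : ℝ}

theorem mul_measure_Ioo_le_integral_comp_div (hψ : ∀ t, 0 ≤ ψ t) (hm : ∀ t, |t| < c → m ≤ ψ t)
    (ha : 0 < a) (hint : Integrable (fun y => ψ ((x - y) / a)) μ) :
    m * (μ (Ioo (x - c * a) (x + c * a))).toReal ≤ ∫ y, ψ ((x - y) / a) ∂μ :=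
  calc m * (μ (Ioo (x - c * a) (x + c * a))).toReal
      = ∫ _ in Ioo (x - c * a) (x + c * a), m ∂μ := by
        rw [setIntegral_const, smul_eq_mul, measureReal_def, mul_comm]
    _ ≤ ∫ y in Ioo (x - c * a) (x + c * a), ψ ((x - y) / a) ∂μ :=
        setIntegral_mono_on (integrableOn_const (measure_ne_top _ _)) hint.integrableOn
          measurableSet_Ioo fun y hy => hm _ ((abs_sub_div_lt_iff ha).2 hy)
    _ ≤ ∫ y, ψ ((x - y) / a) ∂μ := setIntegral_le_integral hint (.of_forall fun _ => hψ _)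

theorem mul_densityRatio_le_scaledConv (hψ : ∀ t, 0 ≤ ψ t) (hm : ∀ t, |t| < c → m ≤ ψ t)
    (hc : 0 < c) (ha : 0 < a) (hint : Integrable (fun y => ψ ((x - y) / a)) μ) :
    m * (2 * c) ^ α * densityRatio μ α x (c * a) ≤ scaledConv ψ μ α x a := by
  have hscale : (2 * (c * a)) ^ α = (2 * c) ^ α * a ^ α := by
    rw [← mul_assoc, mul_rpow (by positivity) ha.le]
  have h2c : 0 < (2 * c) ^ α := by positivity
  have haα : 0 < a ^ α := by positivity
  rw [densityRatio, scaledConv, hscale, rpow_neg ha.le]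
  calc m * (2 * c) ^ α * ((μ (Ioo (x - c * a) (x + c * a))).toReal / ((2 * c) ^ α * a ^ α))
      = (a ^ α)⁻¹ * (m * (μ (Ioo (x - c * a) (x + c * a))).toReal) := by field_simp
    _ ≤ _ := mul_le_mul_of_nonneg_left
        (mul_measure_Ioo_le_integral_comp_div hψ hm ha hint) (by positivity)

theorem limsup_scaledConv_eq_top (hψ : ∀ t, 0 ≤ ψ t) (hψc : ContinuousAt ψ 0) (hψ0 : 0 < ψ 0)
    (hint : ∀ a, Integrable (fun y => ψ ((x - y) / a)) μ)
    (hD : limsup (fun ε => (densityRatio μ α x ε : EReal)) (𝓝[>] 0) = ⊤) :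
    limsup (fun a => (scaledConv ψ μ α x a : EReal)) (𝓝[>] 0) = ⊤ := by
  obtain ⟨c, hc, hm⟩ : ∃ c > 0, ∀ t, |t| < c → ψ 0 / 2 ≤ ψ t := by
    obtain ⟨c, hc, h⟩ :=
      Metric.eventually_nhds_iff.1 (hψc.eventually (lt_mem_nhds (half_lt_self hψ0)))
    exact ⟨c, hc, fun t ht => (h (by simpa using ht)).le⟩
  set κ := ψ 0 / 2 * (2 * c) ^ α
  have hκ : 0 < κ := by positivity
  rw [EReal.limsup_coe_eq_top_iff] at hD ⊢
  intro M
  have hfreq : ∃ᶠ a in 𝓝[>] 0, M / κ < densityRatio μ α x (c * a) := fun hev =>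
    hD (M / κ) (by
      simpa [mul_inv_cancel_left₀ hc.ne'] using eventually_nhdsGT_zero_mul_left (inv_pos.2 hc) hev)
  refine (hfreq.and_eventually self_mem_nhdsWithin).mono fun a ⟨hMa, (ha : 0 < a)⟩ => ?_
  calc (M : ℝ) = κ * (M / κ) := by field_simp
    _ < κ * densityRatio μ α x (c * a) := mul_lt_mul_of_pos_left hMa hκ
    _ ≤ scaledConv ψ μ α x a := mul_densityRatio_le_scaledConv hψ hm hc ha (hint a)

end LowerBound

theorem exists_measure_Ioo_le_of_limsup_densityRatio_lt_top {μ : Measure ℝ} [IsFiniteMeasure μ]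
    {α x : ℝ} (hα : 0 ≤ α)
    (hD : limsup (fun ε => (densityRatio μ α x ε : EReal)) (𝓝[>] 0) < ⊤) :
    ∃ K, 0 ≤ K ∧ ∀ ε > 0, (μ (Ioo (x - ε) (x + ε))).toReal ≤ K * ε ^ α := by
  obtain ⟨M, hM, -⟩ := EReal.lt_iff_exists_real_btwn.1 hD
  obtain ⟨ε₀, hε₀, hsmall⟩ := (nhdsGT_basis (0 : ℝ)).eventually_iff.1 (eventually_lt_of_limsup_lt hM)
  refine ⟨max (M * 2 ^ α) (μ.real univ * ε₀ ^ (-α)), le_max_of_le_right (by positivity),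
    fun ε hε => ?_⟩
  rcases lt_or_ge ε ε₀ with h | h
  · have hlt : densityRatio μ α x ε < M := EReal.coe_lt_coe_iff.1 (hsmall ⟨hε, h⟩)
    rw [densityRatio, div_lt_iff₀ (by positivity), mul_rpow zero_le_two hε.le, ← mul_assoc] at hlt
    exact hlt.le.trans (mul_le_mul_of_nonneg_right (le_max_left _ _) (by positivity))
  · have hone : 1 ≤ ε₀ ^ (-α) * ε ^ α := by
      rw [rpow_neg hε₀.le, inv_mul_eq_div, one_le_div (by positivity)]
      exact rpow_le_rpow hε₀.le h hα
    calc (μ (Ioo (x - ε) (x + ε))).toReal ≤ μ.real univ := measureReal_mono (subset_univ _)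
      _ ≤ μ.real univ * ε₀ ^ (-α) * ε ^ α := by
        rw [mul_assoc]; exact le_mul_of_one_le_right measureReal_nonneg hone
      _ ≤ _ := mul_le_mul_of_nonneg_right (le_max_right _ _) (by positivity)

section UpperBound

variable {f : ℝ → ℝ} {C δ : ℝ}

theorem one_add_sq_rpow_neg_le {t r : ℝ} (hδ : 0 ≤ δ) (hr : 0 < r) (hrt : r ^ 2 ≤ 1 + t ^ 2) :
    (1 + t ^ 2) ^ (-δ / 2) ≤ r ^ (-δ) :=
  calc (1 + t ^ 2) ^ (-δ / 2) ≤ (r ^ 2) ^ (-δ / 2) :=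
        rpow_le_rpow_of_nonpos (by positivity) hrt (by linarith)
    _ = r ^ (-δ) := by rw [← rpow_natCast, ← rpow_mul hr.le]; congr 1; push_cast; ring

theorem exists_dyadic_bound (hC : 0 ≤ C) (hδ : 0 ≤ δ)
    (hdecay : ∀ t, |f t| ≤ C * (1 + t ^ 2) ^ (-δ / 2)) (t : ℝ) :
    ∃ k : ℕ, |t| < 2 ^ (k + 1) ∧ |f t| ≤ C * (2 ^ (-δ)) ^ k := by
  classical
  have hex : ∃ k : ℕ, |t| < 2 ^ (k + 1) :=
    (pow_unbounded_of_one_lt |t| one_lt_two).imp fun k hk =>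
      hk.trans (pow_lt_pow_right₀ one_lt_two k.lt_succ_self)
  refine ⟨Nat.find hex, Nat.find_spec hex, (hdecay t).trans (mul_le_mul_of_nonneg_left ?_ hC)⟩
  rw [rpow_pow_comm zero_le_two]
  refine one_add_sq_rpow_neg_le hδ (by positivity) ?_
  rcases hk : Nat.find hex with _ | k
  · simp [sq_nonneg t]
  · have hshell : (2 : ℝ) ^ (k + 1) ≤ |t| := not_lt.1 (Nat.find_min hex (hk ▸ k.lt_succ_self))
    nlinarith [sq_abs t, pow_pos (two_pos (α := ℝ)) (k + 1)]

theorem integral_comp_div_le {μ : Measure ℝ} {α K x a : ℝ} (hC : 0 ≤ C) (hδ : 0 ≤ δ)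
    (hαδ : α < δ) (hK : 0 ≤ K) (hdecay : ∀ t, |f t| ≤ C * (1 + t ^ 2) ^ (-δ / 2))
    (hμ : ∀ ε > 0, μ (Ioo (x - ε) (x + ε)) ≤ ENNReal.ofReal (K * ε ^ α)) (ha : 0 < a) :
    ∫ y, f ((x - y) / a) ∂μ ≤ C * K * 2 ^ α * (1 - 2 ^ α * 2 ^ (-δ))⁻¹ * a ^ α := by
  set q : ℝ := 2 ^ α * 2 ^ (-δ)
  have hq0 : 0 ≤ q := by positivity
  have hq1 : q < 1 := by
    rw [show q = 2 ^ (α - δ) by rw [sub_eq_add_neg, rpow_add two_pos]]; exact rpow_lt_one_of_one_lt_of_neg one_lt_two (by linarith)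
  set shell : ℕ → Set ℝ := fun k => Ioo (x - 2 ^ (k + 1) * a) (x + 2 ^ (k + 1) * a)
  set w : ℕ → ENNReal := fun k => ENNReal.ofReal (C * (2 ^ (-δ)) ^ k)
  have hpointwise (y : ℝ) :
      ENNReal.ofReal ‖f ((x - y) / a)‖ ≤ ∑' k, (shell k).indicator (fun _ => w k) y := by
    obtain ⟨k, hk, hfk⟩ := exists_dyadic_bound hC hδ hdecay ((x - y) / a)
    calc ENNReal.ofReal ‖f ((x - y) / a)‖ ≤ w k := ENNReal.ofReal_le_ofReal hfk
      _ = (shell k).indicator (fun _ => w k) y := by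
        rw [indicator_of_mem ((abs_sub_div_lt_iff ha).1 hk)]
      _ ≤ _ := ENNReal.le_tsum k
  have hterm (k : ℕ) : w k * μ (shell k) ≤ ENNReal.ofReal (C * K * (2 * a) ^ α * q ^ k) := by
    have hball : (2 : ℝ) ^ (k + 1) * a = 2 ^ k * (2 * a) := by ring
    calc w k * μ (shell k) ≤ w k * ENNReal.ofReal (K * (2 ^ (k + 1) * a) ^ α) := by
          gcongr; exact hμ _ (by positivity)
      _ = ENNReal.ofReal (C * K * (2 * a) ^ α * q ^ k) := by
        rw [← ENNReal.ofReal_mul (by positivity), hball, mul_rpow (by positivity) (by positivity),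
          ← rpow_pow_comm zero_le_two, mul_pow]
        ring_nf
  have hlint : ∫⁻ y, ENNReal.ofReal ‖f ((x - y) / a)‖ ∂μ ≤
      ENNReal.ofReal (C * K * (2 * a) ^ α * (1 - q)⁻¹) :=
    calc ∫⁻ y, ENNReal.ofReal ‖f ((x - y) / a)‖ ∂μ
        ≤ ∫⁻ y, ∑' k, (shell k).indicator (fun _ => w k) y ∂μ := lintegral_mono hpointwise
      _ = ∑' k, w k * μ (shell k) := by
        rw [lintegral_tsum fun k => (measurable_const.indicator measurableSet_Ioo).aemeasurable]
        simp only [shell, lintegral_indicator_const measurableSet_Ioo]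
      _ ≤ ∑' k, ENNReal.ofReal (C * K * (2 * a) ^ α * q ^ k) := ENNReal.tsum_le_tsum hterm
      _ = _ := by
        rw [← ENNReal.ofReal_tsum_of_nonneg (fun k => by positivity)
          ((summable_geometric_of_lt_one hq0 hq1).mul_left _), tsum_mul_left,
          tsum_geometric_of_lt_one hq0 hq1]
  calc ∫ y, f ((x - y) / a) ∂μ ≤ ‖∫ y, f ((x - y) / a) ∂μ‖ := le_norm_self _
    _ ≤ (∫⁻ y, ENNReal.ofReal ‖f ((x - y) / a)‖ ∂μ).toReal := norm_integral_le_lintegral_norm _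
    _ ≤ C * K * (2 * a) ^ α * (1 - q)⁻¹ :=
        ENNReal.toReal_le_of_le_ofReal (by have := sub_pos.2 hq1; positivity) hlint
    _ = _ := by rw [mul_rpow zero_le_two ha.le]; ring

theorem limsup_scaledConv_lt_top {μ : Measure ℝ} [IsFiniteMeasure μ] {α K x : ℝ} (hC : 0 ≤ C)
    (hδ : 0 ≤ δ) (hαδ : α < δ) (hK : 0 ≤ K) (hdecay : ∀ t, |f t| ≤ C * (1 + t ^ 2) ^ (-δ / 2))
    (hμ : ∀ ε > 0, (μ (Ioo (x - ε) (x + ε))).toReal ≤ K * ε ^ α) :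
    limsup (fun a => (scaledConv f μ α x a : EReal)) (𝓝[>] 0) < ⊤ := by
  set K' := C * K * 2 ^ α * (1 - 2 ^ α * 2 ^ (-δ))⁻¹
  have hbound : ∀ᶠ a in 𝓝[>] (0 : ℝ), (scaledConv f μ α x a : EReal) ≤ K' := by
    filter_upwards [self_mem_nhdsWithin] with a (ha : 0 < a)
    have hμ' : ∀ ε > 0, μ (Ioo (x - ε) (x + ε)) ≤ ENNReal.ofReal (K * ε ^ α) := fun ε hε =>
      (ENNReal.le_ofReal_iff_toReal_le (measure_ne_top _ _) (by positivity)).2 (hμ ε hε)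
    rw [EReal.coe_le_coe_iff, scaledConv, rpow_neg ha.le, inv_mul_le_iff₀ (by positivity),
      mul_comm]
    exact integral_comp_div_le hC hδ hαδ hK hdecay hμ' ha
  exact (limsup_le_of_le (by isBoundedDefault) hbound).trans_lt (EReal.coe_lt_top K')

end UpperBound

theorem upper_alpha_density_infinite_iff_conv_infinite_general
    (ψ : ℝ → ℝ) (hC1 : ContDiff ℝ 1 ψ) (hpos : ∀ x : ℝ, 0 ≤ ψ x) (hψ0 : ψ 0 = 1)
    (hdecay : ∃ C > (0:ℝ), ∃ δ > (1:ℝ), ∀ x : ℝ,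
      |ψ x| + |x * deriv ψ x| ≤ C * (1 + x ^ 2) ^ (-δ / 2))
    (μ : Measure ℝ) [IsProbabilityMeasure μ]
    (α : ℝ) (hα0 : 0 < α) (hα1 : α ≤ 1) (x : ℝ) :
    (Filter.limsup
        (fun ε : ℝ => (((μ (Ioo (x - ε) (x + ε))).toReal / (2 * ε) ^ α : ℝ) : EReal))
        (𝓝[>] 0) = ⊤ →
      Filter.limsup
        (fun a : ℝ => ((a ^ (-α) * ∫ y : ℝ, ψ ((x - y) / a) ∂μ : ℝ) : EReal))
        (𝓝[>] 0) = ⊤) ∧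
    (Filter.limsup
        (fun a : ℝ => ((a ^ (-α) * ∫ y : ℝ, ψ ((x - y) / a) ∂μ : ℝ) : EReal))
        (𝓝[>] 0) < ⊤ ↔
      Filter.limsup
        (fun ε : ℝ => (((μ (Ioo (x - ε) (x + ε))).toReal / (2 * ε) ^ α : ℝ) : EReal))
        (𝓝[>] 0) < ⊤) := by
  obtain ⟨C, hC, δ, hδ, hdecay⟩ := hdecay
  have hψ (t : ℝ) : |ψ t| ≤ C * (1 + t ^ 2) ^ (-δ / 2) :=
    (le_add_of_nonneg_right (abs_nonneg _)).trans (hdecay t)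
  have hD_top := limsup_scaledConv_eq_top (μ := μ) (α := α) hpos hC1.continuous.continuousAt
    (hψ0 ▸ one_pos) (integrable_comp_sub_div hC1.continuous hC.le (by linarith) hψ x)
  refine ⟨hD_top, fun h => lt_top_iff_ne_top.2 fun hD => h.ne (hD_top hD), fun hD => ?_⟩
  obtain ⟨K, hK, hμ⟩ := exists_measure_Ioo_le_of_limsup_densityRatio_lt_top hα0.le hD
  exact limsup_scaledConv_lt_top hC.le (by linarith) (by linarith) hK hψ hμ

/-- Theorem 2.9 (second half): for non-negative `ψ`, if
`D_μ^α(x) = limsup_{ε→0⁺} μ((x-ε,x+ε))/(2ε)^α` is infinite then so is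
`C_{μ,ψ}^α(x) = limsup_{a→0⁺} a^{-α} (ψ_a * μ)(x)`; consequently the two quantities are
either both finite or both infinite. The limsups are taken in the extended reals. -/
theorem upper_alpha_density_infinite_iff_conv_infinite
    (ψ : ℝ → ℝ) (hC1 : ContDiff ℝ 1 ψ) (hpos : ∀ x : ℝ, 0 ≤ ψ x) (hψ0 : ψ 0 = 1)
    (heven : ∀ x : ℝ, ψ (-x) = ψ x)
    (hdecay : ∃ C > (0:ℝ), ∃ δ > (1:ℝ), ∀ x : ℝ,
      |ψ x| + |x * deriv ψ x| ≤ C * (1 + x ^ 2) ^ (-δ / 2))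
    (μ : Measure ℝ) [IsProbabilityMeasure μ]
    (α : ℝ) (hα0 : 0 < α) (hα1 : α ≤ 1) (x : ℝ) :
    (Filter.limsup
        (fun ε : ℝ => (((μ (Ioo (x - ε) (x + ε))).toReal / (2 * ε) ^ α : ℝ) : EReal))
        (𝓝[>] 0) = ⊤ →
      Filter.limsup
        (fun a : ℝ => ((a ^ (-α) * ∫ y : ℝ, ψ ((x - y) / a) ∂μ : ℝ) : EReal))
        (𝓝[>] 0) = ⊤) ∧
    (Filter.limsup
        (fun a : ℝ => ((a ^ (-α) * ∫ y : ℝ, ψ ((x - y) / a) ∂μ : ℝ) : EReal))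
        (𝓝[>] 0) < ⊤ ↔
      Filter.limsup
        (fun ε : ℝ => (((μ (Ioo (x - ε) (x + ε))).toReal / (2 * ε) ^ α : ℝ) : EReal))
        (𝓝[>] 0) < ⊤) :=
  upper_alpha_density_infinite_iff_conv_infinite_general ψ hC1 hpos hψ0 hdecay μ α hα0 hα1 x
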